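/- The Mellin–Fejér kernel with c = 0, ρ = 1, F(x) := (1/(2π)) sinc²(log(√x)/π) (where sinc(u) = sin(πu)/(πu)), satisfies the partition of unity property ∑_{k∈ℤ} F(e^k x) = 1 for all x > 0. -/

import Mathlib

open Real

/-- `sinc u = sin(πu)/(πu)`, `sinc 0 = 1`. -/
noncomputable def sinc (u : ℝ) : ℝ :=
  if u = 0 then 1 else Real.sin (π * u) / (π * u)

/-- The Mellin–Fejér kernel with `c = 0`, `ρ = 1`:
`F(x) = (1/(2π)) sinc²((1/π) log √x)`. -/
noncomputable def mellinFejer01 (x : ℝ) : ℝ :=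
  1 / (2 * π) * _root_.sinc (Real.log (Real.sqrt x) / π) ^ 2

/-!
With `t = log x`, the `k`-th summand is the Fejér kernel `sinc² ((t + k) / a) / a` at `a = 2π`.
The Fourier transform of `sinc²` is the triangle `max 0 (1 - |ξ|)`, so that of the Fejér kernel is
`ξ ↦ max 0 (1 - a|ξ|)`, which vanishes at every nonzero integer once `a ≥ 1`. Poisson summation
then turns the sum over integer translates into the value of the transform at `0`, which is `1`.
-/

open MeasureTheory Filter Asymptotics FourierTransform Complex

theorem sinc_eq_real_sinc (u : ℝ) : _root_.sinc u = Real.sinc (π * u) := by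
  simp [_root_.sinc, Real.sinc, pi_ne_zero]

@[fun_prop]
theorem continuous_sinc : Continuous _root_.sinc := by
  simp only [funext sinc_eq_real_sinc]
  fun_prop

theorem sinc_sq_le_one (u : ℝ) : _root_.sinc u ^ 2 ≤ 1 := by
  rw [sinc_eq_real_sinc, sq_le_one_iff_abs_le_one]
  exact Real.abs_sinc_le_one _

theorem sinc_mul_pi_mul (u : ℝ) : _root_.sinc u * (π * u) = Real.sin (π * u) := by
  rcases eq_or_ne u 0 with rfl | hu
  · simp
  · rw [_root_.sinc, if_neg hu, div_mul_cancel₀ _ (by positivity)]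

theorem sinc_sq_mul_sq_le_one (u : ℝ) : _root_.sinc u ^ 2 * (π * u) ^ 2 ≤ 1 := by
  rw [← mul_pow, sinc_mul_pi_mul]
  exact sin_sq_le_one _

theorem sinc_sq_le (u : ℝ) : _root_.sinc u ^ 2 ≤ 2 / (1 + (π * u) ^ 2) := by
  rw [le_div_iff₀ (by positivity)]
  linarith [sinc_sq_le_one u, sinc_sq_mul_sq_le_one u]

theorem integrable_sinc_sq : Integrable fun u => _root_.sinc u ^ 2 := by
  refine Integrable.mono' ((integrable_inv_one_add_sq.comp_mul_left' pi_ne_zero).const_mul 2)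
    (by fun_prop) (Eventually.of_forall fun u => ?_)
  rw [norm_of_nonneg (by positivity)]
  simpa [div_eq_mul_inv] using sinc_sq_le u

noncomputable def triangle (ξ : ℝ) : ℝ := max 0 (1 - |ξ|)

theorem triangle_eq_zero {ξ : ℝ} (h : 1 ≤ |ξ|) : triangle ξ = 0 :=
  max_eq_left (by linarith)

theorem triangle_mul_eq_zero {a ξ : ℝ} (ha : 1 ≤ a) (hξ : 1 ≤ |ξ|) : triangle (a * ξ) = 0 := by
  rw [triangle_eq_zero (by rw [abs_mul, abs_of_pos (by linarith)]; nlinarith)]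

theorem triangle_of_nonpos {ξ : ℝ} (h₁ : -1 ≤ ξ) (h₂ : ξ ≤ 0) : triangle ξ = 1 + ξ := by
  rw [triangle, abs_of_nonpos h₂, max_eq_right (by linarith)]
  ring

theorem triangle_of_nonneg {ξ : ℝ} (h₁ : 0 ≤ ξ) (h₂ : ξ ≤ 1) : triangle ξ = 1 - ξ := by
  rw [triangle, abs_of_nonneg h₁, max_eq_right (by linarith)]

@[fun_prop]
theorem continuous_triangle : Continuous triangle := by
  unfold triangle
  fun_prop

theorem support_triangle_subset_Ioo : Function.support triangle ⊆ Set.Ioo (-1) 1 := by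
  intro ξ hξ
  by_contra h
  rw [Set.mem_Ioo, not_and_or, not_lt, not_lt] at h
  exact hξ (triangle_eq_zero (le_abs'.mpr h))

theorem integrable_triangle : Integrable fun ξ => (triangle ξ : ℂ) :=
  (continuous_triangle.integrable_of_hasCompactSupport
    (HasCompactSupport.intro' isCompact_Icc isClosed_Icc
      fun _ hξ => Function.notMem_support.mp fun h =>
        hξ (Set.Ioo_subset_Icc_self (support_triangle_subset_Ioo h)))).ofReal

theorem hasDerivAt_affine_mul_cexp {c : ℂ} (hc : c ≠ 0) (α β : ℂ) (v : ℝ) :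
    HasDerivAt (fun v : ℝ => ((α + β * v) / c - β / c ^ 2) * cexp (c * v))
      ((α + β * v) * cexp (c * v)) v := by
  have hv : HasDerivAt (fun v : ℝ => (v : ℂ)) 1 v := hasDerivAt_id v |>.ofReal_comp
  refine ((((hv.const_mul β).const_add α).div_const c).sub_const (β / c ^ 2) |>.mul
    (hv.const_mul c).cexp).congr_deriv ?_
  field_simp
  ring

theorem integral_affine_mul_cexp {c : ℂ} (hc : c ≠ 0) (α β : ℂ) (a b : ℝ) :
    ∫ v in a..b, (α + β * v) * cexp (c * v) =
      ((α + β * b) / c - β / c ^ 2) * cexp (c * b) -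
        ((α + β * a) / c - β / c ^ 2) * cexp (c * a) :=
  intervalIntegral.integral_eq_sub_of_hasDerivAt (fun v _ => hasDerivAt_affine_mul_cexp hc α β v)
    (by apply Continuous.intervalIntegrable; fun_prop)

theorem fourier_triangle_eq_integral_add_integral (x : ℝ) :
    𝓕 (fun v => (triangle v : ℂ)) x =
      (∫ v in (-1 : ℝ)..0, (1 + 1 * v) * cexp (-2 * π * x * I * v)) +
        ∫ v in (0 : ℝ)..1, (1 + -1 * v) * cexp (-2 * π * x * I * v) := by
  have hcont : Continuous fun v : ℝ => cexp (-2 * π * x * I * v) * triangle v := by fun_prop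
  have hsupp : Function.support (fun v : ℝ => cexp (-2 * π * x * I * v) * triangle v) ⊆
      Set.Ioc (-1) 1 :=
    (Function.support_mul_subset_right _ _).trans <|
      (Function.support_comp_subset ofReal_zero _).trans <|
        support_triangle_subset_Ioo.trans Set.Ioo_subset_Ioc_self
  calc 𝓕 (fun v => (triangle v : ℂ)) x
      = ∫ v : ℝ, cexp (-2 * π * x * I * v) * triangle v := by
        rw [Real.fourier_real_eq_integral_exp_smul]
        refine integral_congr_ae (Eventually.of_forall fun v => ?_)
        simp only [smul_eq_mul]
        push_cast
        ring_nf
    _ = ∫ v in (-1 : ℝ)..1, cexp (-2 * π * x * I * v) * triangle v :=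
        (intervalIntegral.integral_eq_integral_of_support_subset hsupp).symm
    _ = _ := by
        rw [← intervalIntegral.integral_add_adjacent_intervals (b := 0)
          (hcont.intervalIntegrable _ _) (hcont.intervalIntegrable _ _)]
        congr 1 <;> refine intervalIntegral.integral_congr fun v hv => ?_
        · rw [Set.uIcc_of_le (by norm_num)] at hv
          simp only [triangle_of_nonpos hv.1 hv.2]
          push_cast
          ring
        · rw [Set.uIcc_of_le (by norm_num)] at hv
          simp only [triangle_of_nonneg hv.1 hv.2]
          push_cast
          ring

theorem fourier_triangle_of_ne_zero {x : ℝ} (hx : x ≠ 0) :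
    𝓕 (fun v => (triangle v : ℂ)) x = (_root_.sinc x ^ 2 : ℝ) := by
  rw [fourier_triangle_eq_integral_add_integral, _root_.sinc, if_neg hx]
  push_cast
  generalize hz : (π * x : ℂ) = z
  have hz0 : z ≠ 0 := by simp [← hz, pi_ne_zero, hx]
  have hc : -2 * z * I ≠ 0 := by simp [hz0]
  have hsin : Complex.sin z = (cexp (-z * I) - cexp (z * I)) * I / 2 := by
    rw [← two_sin]; ring
  have hexp_mul : cexp (-z * I) * cexp (z * I) = 1 := by rw [← Complex.exp_add]; ring_nf; simp
  have hexp_pos : cexp (-2 * z * I * (1 : ℝ)) = cexp (-z * I) ^ 2 := by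
    rw [← Complex.exp_nat_mul]; push_cast; ring_nf
  have hexp_neg : cexp (-2 * z * I * (-1 : ℝ)) = cexp (z * I) ^ 2 := by
    rw [← Complex.exp_nat_mul]; push_cast; ring_nf
  -- with `c = -2zI` the two halves add up to `(e^c + e^(-c) - 2) / c² = ((e^(-zI) - e^(zI)) / c)²`
  simp only [show (-2 * π * x * I : ℂ) = -2 * z * I by rw [← hz]; ring]
  rw [integral_affine_mul_cexp hc, integral_affine_mul_cexp hc, hexp_pos, hexp_neg, hsin]
  generalize cexp (-z * I) = E at hexp_mul ⊢
  generalize cexp (z * I) = E' at hexp_mul ⊢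
  push_cast
  simp only [mul_zero, Complex.exp_zero]
  field_simp
  linear_combination 2 * hexp_mul + (1 - I ^ 2) * (E - E') ^ 2 * I_sq

theorem MeasureTheory.Integrable.continuous_fourier {E : Type*} [NormedAddCommGroup E]
    [NormedSpace ℂ E] {f : ℝ → E} (hf : Integrable f) : Continuous (𝓕 f) :=
  VectorFourier.fourierIntegral_continuous Real.continuous_fourierChar
    (innerSL ℝ).continuous₂ hf

theorem fourier_triangle :
    𝓕 (fun v => (triangle v : ℂ)) = fun x => ((_root_.sinc x ^ 2 : ℝ) : ℂ) :=
  Continuous.ext_on (dense_compl_singleton 0) integrable_triangle.continuous_fourier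
    (by fun_prop) fun _ hx => fourier_triangle_of_ne_zero hx

theorem fourier_sinc_sq (ξ : ℝ) : 𝓕 (fun u => ((_root_.sinc u ^ 2 : ℝ) : ℂ)) ξ = triangle ξ := by
  have h := congrFun ((show Continuous fun v => (triangle v : ℂ) by fun_prop).fourierInv_fourier_eq
    integrable_triangle (fourier_triangle ▸ integrable_sinc_sq.ofReal)) (-ξ)
  rw [Real.fourierInv_eq_fourier_neg, neg_neg, fourier_triangle] at h
  rw [h, triangle, triangle, abs_neg]

theorem Real.fourier_smul_comp_div {E : Type*} [NormedAddCommGroup E] [NormedSpace ℂ E]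
    (f : ℝ → E) {a : ℝ} (ha : 0 < a) (ξ : ℝ) :
    𝓕 (fun u => a⁻¹ • f (u / a)) ξ = 𝓕 f (a * ξ) := by
  have h := Measure.integral_comp_div (fun v => 𝐞 (-(v * (a * ξ))) • f v) a
  rw [abs_of_pos ha] at h
  rw [Real.fourier_real_eq, Real.fourier_real_eq, ← inv_smul_smul₀ ha.ne' (∫ v, _ • f v), ← h,
    ← integral_smul]
  congr 1 with u
  rw [smul_comm, show u / a * (a * ξ) = u * ξ by field_simp]

noncomputable def fejerKernel (a u : ℝ) : ℝ := _root_.sinc (u / a) ^ 2 / a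

theorem fourier_fejerKernel {a : ℝ} (ha : 0 < a) (ξ : ℝ) :
    𝓕 (fun u => (fejerKernel a u : ℂ)) ξ = triangle (a * ξ) := by
  have h : (fun u => (fejerKernel a u : ℂ)) = fun u => a⁻¹ • ((_root_.sinc (u / a) ^ 2 : ℝ) : ℂ) := by
    funext u
    simp [fejerKernel, div_eq_inv_mul]
  rw [h, Real.fourier_smul_comp_div (fun u => ((_root_.sinc u ^ 2 : ℝ) : ℂ)) ha, fourier_sinc_sq]

theorem eventually_one_le_abs_cocompact : ∀ᶠ u : ℝ in cocompact ℝ, 1 ≤ |u| :=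
  tendsto_norm_cocompact_atTop.eventually_ge_atTop 1

theorem fejerKernel_isBigO_cocompact (a : ℝ) :
    (fun u => (fejerKernel a u : ℂ)) =O[cocompact ℝ] (|·| ^ (-2 : ℝ)) := by
  refine Asymptotics.isBigO_iff.mpr ⟨|a| / π ^ 2, ?_⟩
  filter_upwards [eventually_one_le_abs_cocompact] with u hu
  have hu0 : u ≠ 0 := by rintro rfl; norm_num at hu
  rw [norm_real, Real.norm_eq_abs, Real.norm_eq_abs, Real.rpow_neg (abs_nonneg u), Real.rpow_two,
    sq_abs, abs_inv, abs_sq, fejerKernel, abs_div, abs_sq]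
  rcases eq_or_ne a 0 with rfl | ha
  · simp
  have h := sinc_sq_mul_sq_le_one (u / a)
  rw [mul_div_assoc', div_pow, ← mul_div_assoc, div_le_one (by positivity)] at h
  rw [div_le_iff₀ (abs_pos.mpr ha), show |a| / π ^ 2 * (u ^ 2)⁻¹ * |a| = a ^ 2 / (π * u) ^ 2 by
    rw [← sq_abs a]; ring, le_div_iff₀ (by positivity)]
  exact h

theorem fourier_fejerKernel_intCast {a : ℝ} (ha : 1 ≤ a) (n : ℤ) :
    𝓕 (fun u => (fejerKernel a u : ℂ)) n = if n = 0 then 1 else 0 := by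
  rw [fourier_fejerKernel (by linarith)]
  split_ifs with hn
  · simp [hn, triangle]
  · rw [triangle_mul_eq_zero ha (by exact_mod_cast Int.one_le_abs hn), ofReal_zero]

theorem tsum_fejerKernel_add_int {a : ℝ} (ha : 1 ≤ a) (t : ℝ) :
    ∑' k : ℤ, fejerKernel a (t + k) = 1 := by
  have hFdecay : 𝓕 (fun u => (fejerKernel a u : ℂ)) =O[cocompact ℝ] (|·| ^ (-2 : ℝ)) := by
    refine EventuallyEq.trans_isBigO ?_ (isBigO_zero _ _)
    filter_upwards [eventually_one_le_abs_cocompact] with ξ hξ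
    rw [fourier_fejerKernel (by linarith), triangle_mul_eq_zero ha hξ, ofReal_zero]
  have h := Real.tsum_eq_tsum_fourier_of_rpow_decay (by unfold fejerKernel; fun_prop) one_lt_two
    (fejerKernel_isBigO_cocompact a) hFdecay t
  simp only [fourier_fejerKernel_intCast ha, ite_mul, one_mul, zero_mul, tsum_ite_eq] at h
  rw [_root_.fourier_zero] at h
  exact_mod_cast h

/-- Partition of unity for the Mellin–Fejér kernel. -/
theorem mellinFejer01_partition_of_unity (x : ℝ) (hx : 0 < x) :
    ∑' k : ℤ, mellinFejer01 (Real.exp k * x) = 1 := by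
  have h (k : ℤ) : mellinFejer01 (Real.exp k * x) = fejerKernel (2 * π) (Real.log x + k) := by
    rw [mellinFejer01, fejerKernel, Real.log_sqrt (by positivity),
      Real.log_mul (Real.exp_ne_zero _) hx.ne', Real.log_exp, add_comm, div_div, mul_comm 2 π,
      one_div_mul_eq_div]
  simp_rw [h]
  exact tsum_fejerKernel_add_int (by linarith [pi_gt_three]) _
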